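/- Let M be a real symmetric n×n matrix with a simple eigenvalue λ_r whose eigengap satisfies γ_r = min_{k≠r} |λ_r − λ_k(M)| > 0, and let u_r be a unit eigenvector for λ_r. Let E be symmetric with ‖E‖_op < γ_r/2, and let λ̃_r denote the r-th eigenvalue of M + E (ordered correspondingly). Then |λ̃_r − λ_r − u_rᵀ E u_r| ≤ 2‖E‖_op²/γ_r. -/

import Mathlib

/-!
Let `A = M + E`, `t = ‖E‖`, `e = uᵀEu`, and decompose a unit eigenvector `x` of `A` for the
eigenvalue `ν` nearest to `λ` (so `|ν - λ| ≤ t`) as `x = p u + z` with `z ⊥ u`. Since `M - λ` is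
bounded below by `γ` on `u⊥`, the compression `B` of `A` to `u⊥` has no eigenvalue within `γ - t`
of `λ`, and neither can `A` have two. Projecting the eigen-equation onto `u` and onto `u⊥` gives
`p (ν - λ - e) = ⟪z, b⟫` and `(B - ν) z = -p b`, where `b` is the part of `Eu` orthogonal to `u`,
so `‖b‖² ≤ t² - e²`. In an eigenbasis of `B`, the eigenvalues of `B` on either side of `ν` are at
distance at least `γ - t ± (ν - λ)` from it; this turns the two identities into
`ρ (γ - t + e + ρ) ≤ t² - e²` and its mirror image for `ρ = ν - λ - e`, which force
`|ρ| ≤ 2 t² / γ`.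
-/

open Matrix

/-- The ℓ²→ℓ² operator (spectral) norm of a real square matrix. -/
noncomputable def matOpNorm {n : ℕ} (A : Matrix (Fin n) (Fin n) ℝ) : ℝ :=
  ‖LinearMap.toContinuousLinearMap (Matrix.toEuclideanLin A)‖

open scoped RealInnerProductSpace

section Eigenbasis

variable {ι F : Type*} [Fintype ι] [NormedAddCommGroup F] [InnerProductSpace ℝ F]
  {T : F →ₗ[ℝ] F} {b : OrthonormalBasis ι ℝ F} {lam : ι → ℝ}

theorem inner_eigenbasis_apply_sub_smul (hT : T.IsSymmetric) (hb : ∀ k, T (b k) = lam k • b k)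
    (μ : ℝ) (x : F) (k : ι) : ⟪b k, T x - μ • x⟫ = (lam k - μ) * ⟪b k, x⟫ := by
  rw [inner_sub_right, ← hT, hb, real_inner_smul_left, real_inner_smul_right]
  ring

theorem norm_apply_sub_smul_sq_eq_sum (hT : T.IsSymmetric) (hb : ∀ k, T (b k) = lam k • b k)
    (μ : ℝ) (x : F) : ‖T x - μ • x‖ ^ 2 = ∑ k, (lam k - μ) ^ 2 * ⟪b k, x⟫ ^ 2 := by
  simp_rw [← b.sum_sq_inner_right, inner_eigenbasis_apply_sub_smul hT hb, mul_pow]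

theorem inner_apply_sub_smul_self_eq_sum (hT : T.IsSymmetric)
    (hb : ∀ k, T (b k) = lam k • b k) (μ : ℝ) (x : F) :
    ⟪T x - μ • x, x⟫ = ∑ k, (lam k - μ) * ⟪b k, x⟫ ^ 2 := by
  rw [← b.sum_inner_mul_inner]
  refine Finset.sum_congr rfl fun k _ => ?_
  rw [real_inner_comm, inner_eigenbasis_apply_sub_smul hT hb]
  ring

theorem mul_norm_le_norm_apply_sub_smul (hT : T.IsSymmetric) (hb : ∀ k, T (b k) = lam k • b k)
    {μ δ : ℝ} (hδ : 0 ≤ δ) {x : F} (hx : ∀ k, ⟪b k, x⟫ ≠ 0 → δ ≤ |lam k - μ|) :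
    δ * ‖x‖ ≤ ‖T x - μ • x‖ := by
  refine pow_le_pow_iff_left₀ (by positivity) (norm_nonneg _) two_ne_zero |>.mp ?_
  rw [norm_apply_sub_smul_sq_eq_sum hT hb, mul_pow, ← b.sum_sq_inner_right, Finset.mul_sum]
  refine Finset.sum_le_sum fun k _ => ?_
  by_cases hk : ⟪b k, x⟫ = 0
  · simp [hk]
  · refine mul_le_mul_of_nonneg_right (sq_le_sq.mpr ?_) (sq_nonneg _)
    rw [abs_of_nonneg hδ]
    exact hx k hk

theorem norm_apply_sub_smul_lt_mul_norm (hT : T.IsSymmetric) (hb : ∀ k, T (b k) = lam k • b k)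
    {μ δ : ℝ} {x : F} (hx0 : x ≠ 0) (hx : ∀ k, ⟪b k, x⟫ ≠ 0 → |lam k - μ| < δ) :
    ‖T x - μ • x‖ < δ * ‖x‖ := by
  obtain ⟨k₀, hk₀⟩ : ∃ k, ⟪b k, x⟫ ≠ 0 := by
    by_contra! h
    exact hx0 (InnerProductSpace.ext_inner_left_basis b.toBasis fun k => by simp [h k])
  have hδ : 0 ≤ δ := (abs_nonneg _).trans (hx k₀ hk₀).le
  refine pow_lt_pow_iff_left₀ (norm_nonneg _) (by positivity) two_ne_zero |>.mp ?_
  rw [norm_apply_sub_smul_sq_eq_sum hT hb, mul_pow, ← b.sum_sq_inner_right, Finset.mul_sum]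
  refine Finset.sum_lt_sum (fun k _ => ?_) ⟨k₀, Finset.mem_univ _, ?_⟩
  · by_cases hk : ⟪b k, x⟫ = 0
    · simp [hk]
    · refine mul_le_mul_of_nonneg_right (sq_le_sq.mpr ?_) (sq_nonneg _)
      rw [abs_of_nonneg hδ]
      exact (hx k hk).le
  · refine mul_lt_mul_of_pos_right (sq_lt_sq.mpr ?_) (by positivity)
    rw [abs_of_nonneg hδ]
    exact hx k₀ hk₀

theorem exists_abs_sub_mul_norm_le_norm_apply_sub_smul [Nonempty ι] (hT : T.IsSymmetric)
    (hb : ∀ k, T (b k) = lam k • b k) (μ : ℝ) (x : F) :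
    ∃ k, |lam k - μ| * ‖x‖ ≤ ‖T x - μ • x‖ := by
  obtain ⟨k₀, -, hk₀⟩ := Finset.univ.exists_min_image (fun k => |lam k - μ|) Finset.univ_nonempty
  exact ⟨k₀, mul_norm_le_norm_apply_sub_smul hT hb (abs_nonneg _)
    fun k _ => hk₀ k (Finset.mem_univ k)⟩

theorem mul_inner_apply_sub_smul_self_le_norm_sq (hT : T.IsSymmetric)
    (hb : ∀ k, T (b k) = lam k • b k) {μ D : ℝ} (hD : ∀ k, D * (lam k - μ) ≤ (lam k - μ) ^ 2)
    (x : F) : D * ⟪T x - μ • x, x⟫ ≤ ‖T x - μ • x‖ ^ 2 := by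
  rw [inner_apply_sub_smul_self_eq_sum hT hb, norm_apply_sub_smul_sq_eq_sum hT hb, Finset.mul_sum]
  refine Finset.sum_le_sum fun k _ => ?_
  rw [← mul_assoc]
  exact mul_le_mul_of_nonneg_right (hD k) (sq_nonneg _)

theorem mul_norm_le_norm_apply_sub_smul_of_inner_eq_zero (hT : T.IsSymmetric)
    (hb : ∀ k, T (b k) = lam k • b k) {u : F} {r : ι} {μ γ : ℝ} (hγ : 0 < γ) (hu : u ≠ 0)
    (hTu : T u = μ • u) (hgap : ∀ k, k ≠ r → γ ≤ |μ - lam k|) {v : F} (hv : ⟪u, v⟫ = 0) :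
    γ * ‖v‖ ≤ ‖T v - μ • v‖ := by
  have hu_off : ∀ k, k ≠ r → ⟪b k, u⟫ = 0 := by
    intro k hk
    have hne : lam k - μ ≠ 0 := by
      intro h
      have := hgap k hk
      rw [abs_sub_comm, h, abs_zero] at this
      linarith
    have := inner_eigenbasis_apply_sub_smul hT hb μ u k
    rw [hTu, sub_self, inner_zero_right] at this
    exact (mul_eq_zero.mp this.symm).resolve_left hne
  have hu_r : ⟪b r, u⟫ ≠ 0 := by
    intro h
    refine hu (InnerProductSpace.ext_inner_left_basis b.toBasis fun k => ?_)
    rw [b.coe_toBasis, inner_zero_right]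
    rcases eq_or_ne k r with rfl | hk
    exacts [h, hu_off k hk]
  have hv_r : ⟪b r, v⟫ = 0 := by
    rw [← b.sum_inner_mul_inner, Finset.sum_eq_single r (fun k _ hk => by
      rw [real_inner_comm, hu_off k hk, zero_mul]) (by simp), real_inner_comm] at hv
    exact (mul_eq_zero.mp hv).resolve_left hu_r
  refine mul_norm_le_norm_apply_sub_smul hT hb hγ.le fun k hk => ?_
  rw [abs_sub_comm]
  exact hgap k fun h => hk (h ▸ hv_r)

end Eigenbasis

theorem le_two_mul_sq_div_of_mul_add_le {γ t e ρ : ℝ} (hγ : 0 < γ) (he : |e| ≤ t)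
    (hγt : 2 * t ≤ γ) (h : ρ * (γ - t + e + ρ) ≤ t ^ 2 - e ^ 2) : ρ ≤ 2 * t ^ 2 / γ := by
  -- With `c = 2 t² / γ` and `s = γ - t + e`, the map `ρ ↦ ρ (s + ρ)` is increasing past `c`, and
  -- `γ² (c (s + c) - (t² - e²)) = (γ e + t²)² + t² ((γ - t)² + 2 t²) ≥ 0`.
  rw [le_div_iff₀ hγ]
  by_contra! hρ
  have hs : 0 ≤ γ - t + e := by linarith [neg_abs_le e]
  nlinarith [mul_pos (sub_pos.2 hρ) (by nlinarith [mul_nonneg hγ.le hs, sq_nonneg t] :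
      0 < γ * (γ - t + e) + ρ * γ + 2 * t ^ 2),
    mul_le_mul_of_nonneg_left h (sq_nonneg γ), sq_nonneg (γ * e + t ^ 2),
    mul_nonneg (sq_nonneg t) (sq_nonneg (γ - t)), pow_nonneg (sq_nonneg t) 2]

theorem abs_le_two_mul_sq_div {γ t e ρ : ℝ} (hγ : 0 < γ) (he : |e| ≤ t) (hγt : 2 * t ≤ γ)
    (hpos : ρ * (γ - t + e + ρ) ≤ t ^ 2 - e ^ 2)
    (hneg : -ρ * (γ - t - e - ρ) ≤ t ^ 2 - e ^ 2) : |ρ| ≤ 2 * t ^ 2 / γ := by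
  refine abs_le.mpr ⟨?_, le_two_mul_sq_div_of_mul_add_le hγ he hγt hpos⟩
  have := le_two_mul_sq_div_of_mul_add_le (ρ := -ρ) (e := -e) hγ (by rwa [abs_neg]) hγt
    (by linarith)
  linarith

section Compression

variable {𝕜 F : Type*} [RCLike 𝕜] [NormedAddCommGroup F] [InnerProductSpace 𝕜 F]

noncomputable def compression (K : Submodule 𝕜 F) [K.HasOrthogonalProjection]
    (T : F →ₗ[𝕜] F) : K →ₗ[𝕜] K :=
  (K.orthogonalProjectionOnto : F →ₗ[𝕜] K) ∘ₗ T ∘ₗ K.subtype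

theorem coe_compression_apply (K : Submodule 𝕜 F) [K.HasOrthogonalProjection]
    (T : F →ₗ[𝕜] F) (y : K) : (compression K T y : F) = K.starProjection (T y) :=
  rfl

theorem isSymmetric_compression {T : F →ₗ[𝕜] F} (hT : T.IsSymmetric) (K : Submodule 𝕜 F)
    [K.HasOrthogonalProjection] : (compression K T).IsSymmetric := by
  intro y z
  simp only [compression, LinearMap.coe_comp, Function.comp_apply, Submodule.coe_subtype,
    ContinuousLinearMap.coe_coe, Submodule.inner_orthogonalProjectionOnto_eq_of_mem_right,
    Submodule.inner_orthogonalProjectionOnto_eq_of_mem_left]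
  exact hT y z

end Compression

section Perturbation

variable {F : Type*} [NormedAddCommGroup F] [InnerProductSpace ℝ F]
  {M E : F →ₗ[ℝ] F} {u : F} {μ γ t : ℝ}

theorem starProjection_orthogonal_singleton_of_norm_eq_one (hu : ‖u‖ = 1) (w : F) :
    (ℝ ∙ u)ᗮ.starProjection w = w - ⟪u, w⟫ • u := by
  rw [Submodule.starProjection_orthogonal, _root_.sub_apply,
    Submodule.starProjection_unit_singleton ℝ hu, ContinuousLinearMap.id_apply]

theorem norm_starProjection_orthogonal_singleton_sq (hu : ‖u‖ = 1) (w : F) :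
    ‖(ℝ ∙ u)ᗮ.starProjection w‖ ^ 2 = ‖w‖ ^ 2 - ⟪u, w⟫ ^ 2 := by
  rw [starProjection_orthogonal_singleton_of_norm_eq_one hu, norm_sub_sq_real, norm_smul,
    real_inner_smul_right, real_inner_comm, Real.norm_eq_abs, hu]
  ring_nf
  rw [sq_abs]
  ring

theorem sub_le_abs_sub_of_compression_apply_eq_smul (hM : M.IsSymmetric) (hMu : M u = μ • u)
    (hgap : ∀ v, ⟪u, v⟫ = 0 → γ * ‖v‖ ≤ ‖M v - μ • v‖) (hE : ∀ x, ‖E x‖ ≤ t * ‖x‖)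
    {β : ℝ} {y : (ℝ ∙ u)ᗮ} (hy : y ≠ 0) (hβ : compression (ℝ ∙ u)ᗮ (M + E) y = β • y) :
    γ - t ≤ |β - μ| := by
  have hyu : ⟪u, (y : F)⟫ = 0 := Submodule.mem_orthogonal_singleton_iff_inner_right.mp y.2
  have hMy : M y ∈ (ℝ ∙ u)ᗮ := by
    rw [Submodule.mem_orthogonal_singleton_iff_inner_right, ← hM, hMu, real_inner_smul_left,
      hyu, mul_zero]
  have hres : M y - μ • (y : F) = (β - μ) • (y : F) - (ℝ ∙ u)ᗮ.starProjection (E y) := by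
    have := congrArg Subtype.val hβ
    rw [coe_compression_apply, LinearMap.add_apply, map_add,
      Submodule.starProjection_eq_self_iff.mpr hMy, Submodule.coe_smul] at this
    rw [sub_smul, ← this]
    abel
  have hy_pos : 0 < ‖(y : F)‖ := norm_pos_iff.mpr (by exact_mod_cast hy)
  have : γ * ‖(y : F)‖ ≤ (|β - μ| + t) * ‖(y : F)‖ :=
    calc γ * ‖(y : F)‖ ≤ ‖M y - μ • (y : F)‖ := hgap y hyu
      _ ≤ ‖(β - μ) • (y : F)‖ + ‖(ℝ ∙ u)ᗮ.starProjection (E y)‖ := by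
          rw [hres]; exact norm_sub_le _ _
      _ ≤ |β - μ| * ‖(y : F)‖ + t * ‖(y : F)‖ := by
          rw [norm_smul, Real.norm_eq_abs]
          gcongr
          exact (Submodule.norm_starProjection_apply_le _ _).trans (hE y)
      _ = (|β - μ| + t) * ‖(y : F)‖ := by ring
  nlinarith [le_of_mul_le_mul_right this hy_pos]

theorem compression_orthogonalProjectionOnto_of_apply_eq_smul (hu : ‖u‖ = 1)
    (hMu : M u = μ • u) {ν : ℝ} {x : F} (hAx : (M + E) x = ν • x) :
    compression (ℝ ∙ u)ᗮ (M + E) ((ℝ ∙ u)ᗮ.orthogonalProjectionOnto x) =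
      ν • (ℝ ∙ u)ᗮ.orthogonalProjectionOnto x -
        ⟪u, x⟫ • (ℝ ∙ u)ᗮ.orthogonalProjectionOnto (E u) := by
  have hu0 := Submodule.starProjection_orthogonalComplement_singleton_eq_zero (𝕜 := ℝ) u
  ext1
  simp only [coe_compression_apply, Submodule.coe_sub, Submodule.coe_smul,
    ← Submodule.starProjection_apply]
  calc (ℝ ∙ u)ᗮ.starProjection ((M + E) ((ℝ ∙ u)ᗮ.starProjection x))
      = (ℝ ∙ u)ᗮ.starProjection (ν • x - ⟪u, x⟫ • (μ • u + E u)) := by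
        rw [starProjection_orthogonal_singleton_of_norm_eq_one hu x, map_sub, map_smul, hAx,
          LinearMap.add_apply, hMu]
    _ = ν • (ℝ ∙ u)ᗮ.starProjection x - ⟪u, x⟫ • (ℝ ∙ u)ᗮ.starProjection (E u) := by
        rw [map_sub, map_smul, map_smul, map_add, map_smul, hu0, smul_zero, zero_add]

theorem inner_orthogonalProjectionOnto_of_apply_eq_smul (hA : (M + E).IsSymmetric)
    (hu : ‖u‖ = 1) (hMu : M u = μ • u) {ν : ℝ} {x : F} (hAx : (M + E) x = ν • x) :
    ⟪((ℝ ∙ u)ᗮ.orthogonalProjectionOnto x : F), (ℝ ∙ u)ᗮ.orthogonalProjectionOnto (E u)⟫ =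
      ⟪u, x⟫ * (ν - μ - ⟪u, E u⟫) := by
  have hxEu : ⟪x, E u⟫ = ⟪u, x⟫ * (ν - μ) := by
    have := hA x u
    rw [hAx, LinearMap.add_apply, hMu, inner_add_right, real_inner_smul_left,
      real_inner_smul_right, real_inner_comm u x] at this
    linarith
  simp only [← Submodule.starProjection_apply,
    starProjection_orthogonal_singleton_of_norm_eq_one hu]
  simp only [inner_sub_left, inner_sub_right, real_inner_smul_left, real_inner_smul_right,
    real_inner_self_eq_norm_sq, hu, hxEu, real_inner_comm x u]
  rw [real_inner_comm (E u) u]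
  ring

theorem norm_orthogonalProjectionOnto_sq_le (hu : ‖u‖ = 1) (hE : ∀ x, ‖E x‖ ≤ t * ‖x‖) :
    ‖(ℝ ∙ u)ᗮ.orthogonalProjectionOnto (E u)‖ ^ 2 ≤ t ^ 2 - ⟪u, E u⟫ ^ 2 := by
  rw [Submodule.coe_norm, ← Submodule.starProjection_apply,
    norm_starProjection_orthogonal_singleton_sq hu]
  have := hE u
  rw [hu, mul_one] at this
  nlinarith [norm_nonneg (E u)]

theorem neg_mul_sub_sub_inner_le [FiniteDimensional ℝ F] (hA : (M + E).IsSymmetric)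
    (hu : ‖u‖ = 1) (hMu : M u = μ • u) (hE : ∀ x, ‖E x‖ ≤ t * ‖x‖) {ν : ℝ} {x : F}
    (hAx : (M + E) x = ν • x) (hp : ⟪u, x⟫ ≠ 0) {D : ℝ}
    (hD : ∀ β (y : (ℝ ∙ u)ᗮ), y ≠ 0 → compression (ℝ ∙ u)ᗮ (M + E) y = β • y →
      D * (β - ν) ≤ (β - ν) ^ 2) :
    -D * (ν - μ - ⟪u, E u⟫) ≤ t ^ 2 - ⟪u, E u⟫ ^ 2 := by
  have hB := isSymmetric_compression hA (ℝ ∙ u)ᗮ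
  have h := mul_inner_apply_sub_smul_self_le_norm_sq hB (hB.apply_eigenvectorBasis rfl)
    (fun k => hD _ _ ((hB.eigenvectorBasis rfl).orthonormal.ne_zero k)
      (hB.apply_eigenvectorBasis rfl k)) ((ℝ ∙ u)ᗮ.orthogonalProjectionOnto x)
  rw [compression_orthogonalProjectionOnto_of_apply_eq_smul hu hMu hAx, sub_sub_cancel_left,
    inner_neg_left, real_inner_smul_left, norm_neg, norm_smul, Submodule.coe_inner,
    real_inner_comm ((ℝ ∙ u)ᗮ.orthogonalProjectionOnto x : F),
    inner_orthogonalProjectionOnto_of_apply_eq_smul hA hu hMu hAx, mul_pow, Real.norm_eq_abs,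
    sq_abs] at h
  have hp2 : 0 < ⟪u, x⟫ ^ 2 := by positivity
  nlinarith [norm_orthogonalProjectionOnto_sq_le hu hE]

theorem abs_sub_sub_inner_le_of_apply_eq_smul [FiniteDimensional ℝ F] (hM : M.IsSymmetric)
    (hA : (M + E).IsSymmetric) (hu : ‖u‖ = 1) (hMu : M u = μ • u)
    (hgap : ∀ v, ⟪u, v⟫ = 0 → γ * ‖v‖ ≤ ‖M v - μ • v‖) (hE : ∀ x, ‖E x‖ ≤ t * ‖x‖)
    (hγ : 0 < γ) (hγt : 2 * t < γ) {ν : ℝ} {x : F} (hx : x ≠ 0) (hAx : (M + E) x = ν • x)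
    (hν : |ν - μ| ≤ t) : |ν - μ - ⟪u, E u⟫| ≤ 2 * t ^ 2 / γ := by
  have hp : ⟪u, x⟫ ≠ 0 := by
    intro hp0
    have hBx := compression_orthogonalProjectionOnto_of_apply_eq_smul hu hMu hAx
    have hPx : ((ℝ ∙ u)ᗮ.orthogonalProjectionOnto x : F) = x - ⟪u, x⟫ • u :=
      starProjection_orthogonal_singleton_of_norm_eq_one hu x
    rw [hp0, zero_smul, sub_zero] at hBx hPx
    have := sub_le_abs_sub_of_compression_apply_eq_smul hM hMu hgap hE
      (fun h => hx (by rw [← hPx, h, Submodule.coe_zero])) hBx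
    linarith
  have he : |⟪u, E u⟫| ≤ t := by
    calc |⟪u, E u⟫| ≤ ‖u‖ * ‖E u‖ := abs_real_inner_le_norm _ _
      _ ≤ t := by simpa [hu] using hE u
  -- `γ - t + (ν - μ)` and `γ - t - (ν - μ)` bound the distances from `ν` to the eigenvalues
  -- of the compression below and above it.
  have hside : ∀ β (y : (ℝ ∙ u)ᗮ), y ≠ 0 → compression (ℝ ∙ u)ᗮ (M + E) y = β • y →
      0 ≤ (β - ν) * (β - μ + (γ - t)) ∧ 0 ≤ (β - ν) * (β - μ - (γ - t)) := by
    intro β y hy hβ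
    rcases le_abs'.mp (sub_le_abs_sub_of_compression_apply_eq_smul hM hMu hgap hE hy hβ)
      with h | h
    all_goals constructor <;> nlinarith [abs_le.mp hν]
  refine abs_le_two_mul_sq_div hγ he hγt.le ?_ ?_
  · have := neg_mul_sub_sub_inner_le hA hu hMu hE hAx hp (D := -(γ - t + (ν - μ)))
      fun β y hy hβ => by nlinarith [hside β y hy hβ]
    linarith
  · have := neg_mul_sub_sub_inner_le hA hu hMu hE hAx hp (D := γ - t - (ν - μ))
      fun β y hy hβ => by nlinarith [hside β y hy hβ]
    linarith

theorem eq_of_abs_eigenvalue_sub_lt {ι : Type*} [Fintype ι] (hA : (M + E).IsSymmetric)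
    {b : OrthonormalBasis ι ℝ F} {ν : ι → ℝ} (hb : ∀ k, (M + E) (b k) = ν k • b k)
    (hgap : ∀ v, ⟪u, v⟫ = 0 → γ * ‖v‖ ≤ ‖M v - μ • v‖) (hE : ∀ x, ‖E x‖ ≤ t * ‖x‖)
    {j₁ j₂ : ι} (h₁ : |ν j₁ - μ| < γ - t) (h₂ : |ν j₂ - μ| < γ - t) : j₁ = j₂ := by
  classical
  by_contra hne
  obtain ⟨a₁, a₂, hperp, ha⟩ : ∃ a₁ a₂ : ℝ,
      a₁ * ⟪u, b j₁⟫ + a₂ * ⟪u, b j₂⟫ = 0 ∧ (a₁ ≠ 0 ∨ a₂ ≠ 0) := by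
    by_cases h : ⟪u, b j₁⟫ = 0
    · exact ⟨1, 0, by simp [h], by simp⟩
    · exact ⟨⟪u, b j₂⟫, -⟪u, b j₁⟫, by ring, by simp [h]⟩
  set v := a₁ • b j₁ + a₂ • b j₂
  have hcoord : ∀ k, ⟪b k, v⟫ = (if k = j₁ then a₁ else 0) + (if k = j₂ then a₂ else 0) := by
    intro k
    simp [v, inner_add_right, real_inner_smul_right, orthonormal_iff_ite.mp b.orthonormal]
  have hv0 : v ≠ 0 := by
    intro hv
    have h₁ := hcoord j₁
    have h₂ := hcoord j₂
    rw [hv, inner_zero_right, if_pos rfl, if_neg hne, add_zero] at h₁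
    rw [hv, inner_zero_right, if_neg (Ne.symm hne), if_pos rfl, zero_add] at h₂
    rcases ha with ha | ha
    exacts [ha h₁.symm, ha h₂.symm]
  have hsupp : ∀ k, ⟪b k, v⟫ ≠ 0 → |ν k - μ| < γ - t := by
    intro k hk
    by_cases hk₁ : k = j₁
    · exact hk₁ ▸ h₁
    by_cases hk₂ : k = j₂
    · exact hk₂ ▸ h₂
    simp [hcoord, hk₁, hk₂] at hk
  have hlower : γ * ‖v‖ ≤ ‖(M + E) v - μ • v‖ + t * ‖v‖ :=
    calc γ * ‖v‖ ≤ ‖M v - μ • v‖ :=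
          hgap v (by simp [v, inner_add_right, real_inner_smul_right, hperp])
      _ = ‖((M + E) v - μ • v) - E v‖ := by rw [LinearMap.add_apply]; congr 1; abel
      _ ≤ ‖(M + E) v - μ • v‖ + t * ‖v‖ := (norm_sub_le _ _).trans (by gcongr; exact hE v)
  have hupper := norm_apply_sub_smul_lt_mul_norm hA hb hv0 hsupp
  linarith

end Perturbation

theorem Matrix.IsHermitian.toEuclideanLin_eigenvectorBasis {n : Type*} [Fintype n]
    [DecidableEq n] {A : Matrix n n ℝ} (hA : A.IsHermitian) (k : n) :
    toEuclideanLin A (hA.eigenvectorBasis k) = hA.eigenvalues k • hA.eigenvectorBasis k :=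
  congrArg (WithLp.toLp 2) (hA.mulVec_eigenvectorBasis k)

theorem norm_toEuclideanLin_apply_le {n : ℕ} (A : Matrix (Fin n) (Fin n) ℝ)
    (x : EuclideanSpace ℝ (Fin n)) : ‖toEuclideanLin A x‖ ≤ matOpNorm A * ‖x‖ :=
  (LinearMap.toContinuousLinearMap (toEuclideanLin A)).le_opNorm x

theorem stmt_4_general {n : ℕ} (M E : Matrix (Fin n) (Fin n) ℝ)
    (hM : M.IsHermitian)
    (r : Fin n) (lamr : ℝ)
    (γ : ℝ) (hγ : 0 < γ)
    (hgap : ∀ k, k ≠ r → γ ≤ |lamr - hM.eigenvalues k|)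
    (u : Fin n → ℝ) (hu : ∑ i, u i ^ 2 = 1) (heig : M.mulVec u = lamr • u)
    (hEsmall : matOpNorm E < γ / 2)
    (hME : (M + E).IsHermitian) :
    ∃ j : Fin n, |hME.eigenvalues j - lamr - u ⬝ᵥ E.mulVec u|
        ≤ 2 * matOpNorm E ^ 2 / γ ∧
      ∀ j' : Fin n, |hME.eigenvalues j' - lamr| < γ / 2 →
        hME.eigenvalues j' = hME.eigenvalues j := by
  have hMsym := isSymmetric_toEuclideanLin_iff.mpr hM
  have hsum : toEuclideanLin (M + E) = toEuclideanLin M + toEuclideanLin E := map_add _ _ _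
  have hA := hsum ▸ isSymmetric_toEuclideanLin_iff.mpr hME
  have hbA := hsum ▸ hME.toEuclideanLin_eigenvectorBasis
  have hu' : ‖WithLp.toLp 2 u‖ = 1 := by
    rw [EuclideanSpace.norm_eq, Real.sqrt_eq_one]
    simpa using hu
  have hMu : toEuclideanLin M (WithLp.toLp 2 u) = lamr • WithLp.toLp 2 u :=
    congrArg (WithLp.toLp 2) heig
  have hE := norm_toEuclideanLin_apply_le E
  have hgap' : ∀ v, ⟪WithLp.toLp 2 u, v⟫ = 0 → γ * ‖v‖ ≤ ‖toEuclideanLin M v - lamr • v‖ :=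
    fun _ => mul_norm_le_norm_apply_sub_smul_of_inner_eq_zero hMsym
      hM.toEuclideanLin_eigenvectorBasis hγ (norm_ne_zero_iff.mp (hu'.trans_ne one_ne_zero)) hMu
      hgap
  have : Nonempty (Fin n) := ⟨r⟩
  obtain ⟨j, hj⟩ := exists_abs_sub_mul_norm_le_norm_apply_sub_smul hA hbA lamr (WithLp.toLp 2 u)
  have hjt : |hME.eigenvalues j - lamr| ≤ matOpNorm E := by
    rw [hu', mul_one, LinearMap.add_apply, hMu, add_sub_cancel_left] at hj
    simpa [hu'] using hj.trans (hE _)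
  refine ⟨j, ?_, fun j' hj' => congrArg _ (eq_of_abs_eigenvalue_sub_lt hA hbA hgap' hE
    (by linarith) (by linarith))⟩
  have := abs_sub_sub_inner_le_of_apply_eq_smul hMsym hA hu' hMu hgap' hE hγ (by linarith)
    (hME.eigenvectorBasis.orthonormal.ne_zero j) (hbA j) hjt
  have hdot : u ⬝ᵥ E.mulVec u = ⟪WithLp.toLp 2 u, toEuclideanLin E (WithLp.toLp 2 u)⟫ := by
    rw [toLpLin_toLp, EuclideanSpace.inner_toLp_toLp, star_trivial, dotProduct_comm]
    rfl
  rwa [hdot]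

theorem stmt_4 {n : ℕ} (M E : Matrix (Fin n) (Fin n) ℝ)
    (hM : M.IsHermitian) (hE : E.IsHermitian)
    (r : Fin n) (lamr : ℝ) (hlamr : lamr = hM.eigenvalues r)
    (γ : ℝ) (hγ : 0 < γ)
    (hgap : ∀ k, k ≠ r → γ ≤ |lamr - hM.eigenvalues k|)
    (hγmin : ∃ k, k ≠ r ∧ γ = |lamr - hM.eigenvalues k|)
    (u : Fin n → ℝ) (hu : ∑ i, u i ^ 2 = 1) (heig : M.mulVec u = lamr • u)
    (hEsmall : matOpNorm E < γ / 2)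
    (hME : (M + E).IsHermitian) :
    ∃ j : Fin n, |hME.eigenvalues j - lamr - u ⬝ᵥ E.mulVec u|
        ≤ 2 * matOpNorm E ^ 2 / γ ∧
      ∀ j' : Fin n, |hME.eigenvalues j' - lamr| < γ / 2 →
        hME.eigenvalues j' = hME.eigenvalues j :=
  stmt_4_general M E hM r lamr γ hγ hgap u hu heig hEsmall hME
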